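/- Let p be a prime and j ≥ 2. Then there exist ℓ ≥ 2 and positive natural numbers j_1, ..., j_ℓ with j_1 + ... + j_ℓ = j such that v_p(j!) − (v_p(j_1!) + ... + v_p(j_ℓ!)) ≤ 1. -/

import Mathlib

/-!
Two parts `a + (j - a) = j` suffice: the valuation defect of that split is `v_p (j.choose a)`, so
it is enough to find `0 < a < j` with `v_p (j.choose a) ≤ 1`. Let `p ^ k` be the largest power of `p`
not exceeding `j`. If `p ^ k < j`, adding `p ^ k` and `j - p ^ k` in base `p` produces no carry, so by
Kummer's theorem `a = p ^ k` works. If `j = p ^ k`, then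
`v_p (choose (p ^ k) (p ^ (k - 1))) = 1`, so `a = p ^ (k - 1)` works.
-/

open Nat Finset

namespace Nat

variable {p : ℕ}

theorem padicValNat_choose_pow_eq_zero [hp : Fact p.Prime] {n k : ℕ} (hkn : p ^ k ≤ n)
    (hnk : n < p ^ (k + 1)) : padicValNat p (n.choose (p ^ k)) = 0 := by
  rw [padicValNat_choose hkn (log_lt_of_lt_pow
    ((pow_pos hp.out.pos k).trans_le hkn).ne' hnk), Finset.card_eq_zero,
    filter_eq_empty_iff]
  intro i hi
  have hik : p ^ i ∣ p ^ k := pow_dvd_pow p (by grind)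
  rw [Nat.mod_eq_zero_of_dvd hik, zero_add, not_le]
  exact Nat.mod_lt _ (pow_pos hp.out.pos i)

theorem padicValNat_choose_pow_succ_pow (hp : p.Prime) (k : ℕ) :
    padicValNat p ((p ^ (k + 1)).choose (p ^ k)) = 1 := by
  rw [← factorization_def _ hp, factorization_choose_prime_pow hp
    (pow_le_pow_right₀ hp.one_lt.le k.le_succ) (pow_ne_zero _ hp.ne_zero),
    factorization_pow_self hp]
  omega

theorem exists_padicValNat_choose_le_one (hp : p.Prime) {n : ℕ} (hn : 2 ≤ n) :
    ∃ a, 0 < a ∧ a < n ∧ padicValNat p (n.choose a) ≤ 1 := by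
  have : Fact p.Prime := ⟨hp⟩
  have hkn : p ^ log p n ≤ n := pow_log_le_self p (by omega)
  rcases hkn.lt_or_eq with hlt | heq
  · exact ⟨p ^ log p n, pow_pos hp.pos _, hlt,
      (padicValNat_choose_pow_eq_zero hkn (lt_pow_succ_log_self hp.one_lt n)).trans_le zero_le_one⟩
  · obtain ⟨m, hm⟩ : ∃ m, log p n = m + 1 :=
      exists_eq_add_one.mpr (Nat.pos_of_ne_zero fun h0 => by simp [h0] at heq; omega)
    rw [hm] at heq
    refine ⟨p ^ m, pow_pos hp.pos m, heq ▸ pow_lt_pow_right₀ hp.one_lt m.lt_succ_self, ?_⟩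
    rw [← heq, padicValNat_choose_pow_succ_pow hp]

theorem padicValNat_factorial_sub_factorial_add_factorial [Fact p.Prime] {n a : ℕ}
    (ha : a ≤ n) :
    padicValNat p n ! - (padicValNat p a ! + padicValNat p (n - a)!) =
      padicValNat p (n.choose a) := by
  rw [← choose_mul_factorial_mul_factorial ha,
    padicValNat.mul (mul_ne_zero (choose_ne_zero ha) (factorial_ne_zero _)) (factorial_ne_zero _),
    padicValNat.mul (choose_ne_zero ha) (factorial_ne_zero _)]
  omega

end Nat

/-- For a prime `p` and `j ≥ 2`, there exist `ℓ ≥ 2` and positive natural numbers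
`j_1, ..., j_ℓ` summing to `j` such that
`v_p(j!) − (v_p(j_1!) + ... + v_p(j_ℓ!)) ≤ 1`. -/
theorem exists_young_subgroup_small_index_valuation
    (p : ℕ) (hp : p.Prime) (j : ℕ) (hj : 2 ≤ j) :
    ∃ (ℓ : ℕ) (f : Fin ℓ → ℕ), 2 ≤ ℓ ∧ (∀ i, 0 < f i) ∧ (∑ i, f i = j) ∧
      padicValNat p (Nat.factorial j)
        - ∑ i, padicValNat p (Nat.factorial (f i)) ≤ 1 := by
  have : Fact p.Prime := ⟨hp⟩
  obtain ⟨a, ha0, haj, hval⟩ := exists_padicValNat_choose_le_one hp hj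
  refine ⟨2, ![a, j - a], le_rfl, ?_, ?_, ?_⟩
  · intro i
    fin_cases i <;> simp [ha0, haj]
  · simp [haj.le]
  · simpa [Fin.sum_univ_two, padicValNat_factorial_sub_factorial_add_factorial haj.le]
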